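/- Let σx, σy, σz denote the standard 2×2 Pauli matrices, and define the projectors Π₁ = (1 + (−σx + σy + σz)/√3)/2 and Π₂ = (1 + (σx − σy + σz)/√3)/2. If ρ is any 2×2 complex matrix that is positive semidefinite with trace 1, and trace(ρ·Π₁) = (1 + 1/√3)/2 and trace(ρ·Π₂) = (1 + 1/√3)/2, then ρ equals the matrix with entries ρ₀₀ = 1, ρ₀₁ = ρ₁₀ = ρ₁₁ = 0, i.e., ρ = |0⟩⟨0|. -/

import Mathlib

open Matrix Complex
open scoped ComplexOrder

/-- The Pauli matrix `σx`. -/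
noncomputable def sigmaX : Matrix (Fin 2) (Fin 2) ℂ := !![0, 1; 1, 0]

/-- The Pauli matrix `σy`. -/
noncomputable def sigmaY : Matrix (Fin 2) (Fin 2) ℂ := !![0, -I; I, 0]

/-- The Pauli matrix `σz`. -/
noncomputable def sigmaZ : Matrix (Fin 2) (Fin 2) ℂ := !![1, 0; 0, -1]

/-- The projector `Π₁ = (1 + (−σx + σy + σz)/√3)/2`. -/
noncomputable def Proj1 : Matrix (Fin 2) (Fin 2) ℂ :=
  (2 : ℂ)⁻¹ • ((1 : Matrix (Fin 2) (Fin 2) ℂ) +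
    ((Real.sqrt 3 : ℂ))⁻¹ • (-sigmaX + sigmaY + sigmaZ))

/-- The projector `Π₂ = (1 + (σx − σy + σz)/√3)/2`. -/
noncomputable def Proj2 : Matrix (Fin 2) (Fin 2) ℂ :=
  (2 : ℂ)⁻¹ • ((1 : Matrix (Fin 2) (Fin 2) ℂ) +
    ((Real.sqrt 3 : ℂ))⁻¹ • (sigmaX - sigmaY + sigmaZ))

/-- Single-qubit compression: two projector expectation values plus positivity
and unit trace determine the state to be `|0⟩⟨0|`. -/
theorem stmt4 (ρ : Matrix (Fin 2) (Fin 2) ℂ)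
    (hpsd : ρ.PosSemidef) (htr : ρ.trace = 1)
    (h1 : (ρ * Proj1).trace = (((1 + 1 / Real.sqrt 3) / 2 : ℝ) : ℂ))
    (h2 : (ρ * Proj2).trace = (((1 + 1 / Real.sqrt 3) / 2 : ℝ) : ℂ)) :
    ρ = !![1, 0; 0, 0] := by
  have hs : (Real.sqrt 3 : ℂ) ≠ 0 := by
    simpa using (Complex.ofReal_ne_zero.mpr (by positivity : Real.sqrt 3 ≠ 0))
  simp only [Proj1, Proj2, sigmaX, sigmaY, sigmaZ, Matrix.trace, Matrix.diag,
    Matrix.mul_apply, Fin.sum_univ_two, Matrix.smul_apply, Matrix.add_apply,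
    Matrix.sub_apply, Matrix.neg_apply, Matrix.one_apply, Matrix.cons_val',
    Matrix.cons_val_zero, Matrix.cons_val_one, Matrix.head_cons, Matrix.head_fin_const,
    Complex.ofReal_div, Complex.ofReal_add, Complex.ofReal_one,
    smul_eq_mul, Matrix.of_apply, if_true, Fin.one_eq_zero_iff, Fin.zero_eq_one_iff,
    one_ne_zero, zero_ne_one, if_false, Complex.ofReal_ofNat] at h1 h2 htr ⊢
  -- z equation: add h1 h2
  have hz : ρ 0 0 - ρ 1 1 = 1 := by
    field_simp at h1 h2
    refine mul_left_cancel₀ hs ?_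
    linear_combination (Real.sqrt 3:ℂ)*(h1 + h2)/2 - (Real.sqrt 3:ℂ)*(Real.sqrt 3:ℂ)*htr
  have ha : ρ 0 0 = 1 := by linear_combination (htr + hz)/2
  have hd : ρ 1 1 = 0 := by linear_combination (htr - hz)/2
  have hv : ρ *ᵥ ![0,1] = 0 := by
    rw [← hpsd.dotProduct_mulVec_zero_iff]
    simp [dotProduct, mulVec, Fin.sum_univ_two, hd]
  have h01 : ρ 0 1 = 0 := by
    have := congrFun hv 0
    simpa [mulVec, dotProduct, Fin.sum_univ_two] using this
  have h10 : ρ 1 0 = 0 := by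
    have := hpsd.isHermitian.apply 0 1
    rw [h01] at this
    exact star_eq_zero.mp this
  ext i j
  fin_cases i <;> fin_cases j <;> simp [ha, hd, h01, h10]
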